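/- Let X, Y, Z be smooth finite-dimensional real manifolds without boundary, let z₀ ∈ Z, let C ⊆ Y be a compact set, and let f : X × Y → Z be a continuously differentiable (C¹) map. For y ∈ Y write f_y : X → Z for the map x ↦ f(x, y). Assume that for each y ∈ C there exists x ∈ X with f(x, y) = z₀ such that the differential of f_y at x is a surjective linear map of tangent spaces. Then there exists an open set V ⊆ Z with z₀ ∈ V such that V ⊆ f_y(X) for every y ∈ C. -/

import Mathlib

open scoped Manifold
open Filter Set Topology

/-!
At a point `(x₀, y₀)` with `f (x₀, y₀) = z₀` and `∂ₓf (x₀, y₀)` surjective, the map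
`(x, y) ↦ (f (x, y), y)` has surjective differential, so by the surjective inverse function
theorem, read in charts, it maps neighbourhoods of `(x₀, y₀)` onto neighbourhoods of `(z₀, y₀)`.
Its image thus contains a product `V × U`, i.e. `V ⊆ f_y(X)` for all `y ∈ U`, and compactness of
`C` lets finitely many such `V` be intersected.
-/

theorem ContinuousLinearMap.prod_snd_surjective_of_comp_inl_surjective
    {R E F G : Type*} [Semiring R] [TopologicalSpace E] [AddCommGroup E] [Module R E]
    [TopologicalSpace F] [AddCommGroup F] [Module R F]
    [TopologicalSpace G] [AddCommGroup G] [Module R G]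
    {D : E × F →L[R] G} (hD : Function.Surjective (D ∘L ContinuousLinearMap.inl R E F)) :
    Function.Surjective (D.prod (ContinuousLinearMap.snd R E F)) := by
  rintro ⟨w, v⟩
  obtain ⟨u, hu⟩ := hD (w - D (0, v))
  replace hu : D (u, 0) = w - D (0, v) := hu
  refine ⟨(u, v), Prod.ext ?_ rfl⟩
  calc D (u, v) = D (u, 0) + D (0, v) := by rw [← map_add, Prod.mk_add_mk, add_zero, zero_add]
    _ = w := by rw [hu, sub_add_cancel]

section Charts

variable {𝕜 : Type*} [NontriviallyNormedField 𝕜]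
  {E : Type*} [NormedAddCommGroup E] [NormedSpace 𝕜 E] {H : Type*} [TopologicalSpace H]
  {I : ModelWithCorners 𝕜 E H} [I.Boundaryless]
  {M : Type*} [TopologicalSpace M] [ChartedSpace H M]

theorem map_extChartAt_symm_nhds_of_boundaryless (x : M) :
    map (extChartAt I x).symm (𝓝 (extChartAt I x x)) = 𝓝 x := by
  rw [← map_extChartAt_symm_nhdsWithin_range (I := I) x, I.range_eq_univ, nhdsWithin_univ]

variable {E' : Type*} [NormedAddCommGroup E'] [NormedSpace 𝕜 E'] {H' : Type*}
  [TopologicalSpace H'] {J : ModelWithCorners 𝕜 E' H'} [J.Boundaryless]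
  {N : Type*} [TopologicalSpace N] [ChartedSpace H' N] {f : M → N} {p : M}

theorem ContinuousAt.map_nhds_eq_of_map_writtenInExtChartAt (hf : ContinuousAt f p)
    (h : map (writtenInExtChartAt I J p f) (𝓝 (extChartAt I p p)) =
      𝓝 (writtenInExtChartAt I J p f (extChartAt I p p))) :
    map f (𝓝 p) = 𝓝 (f p) := by
  have hf_eq : f =ᶠ[𝓝 p]
      (extChartAt J (f p)).symm ∘ writtenInExtChartAt I J p f ∘ extChartAt I p := by
    filter_upwards [extChartAt_source_mem_nhds (I := I) p,
      hf (extChartAt_source_mem_nhds (I := J) (f p))] with x hx hfx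
    simp only [writtenInExtChartAt, Function.comp_apply]
    rw [(extChartAt I p).left_inv hx, (extChartAt J (f p)).left_inv hfx]
  rw [map_congr hf_eq, ← map_map, ← map_map, map_extChartAt_nhds_of_boundaryless, h]
  simp only [writtenInExtChartAt, Function.comp_apply, extChartAt_to_inv]
  exact map_extChartAt_symm_nhds_of_boundaryless (f p)

end Charts

section Submersion

variable {𝕜 : Type*} [RCLike 𝕜]
  {E : Type*} [NormedAddCommGroup E] [NormedSpace 𝕜 E] {H : Type*} [TopologicalSpace H]
  {I : ModelWithCorners 𝕜 E H} [I.Boundaryless]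
  {M : Type*} [TopologicalSpace M] [ChartedSpace H M]
  {E' : Type*} [NormedAddCommGroup E'] [NormedSpace 𝕜 E'] {H' : Type*}
  [TopologicalSpace H'] {J : ModelWithCorners 𝕜 E' H'}
  {N : Type*} [TopologicalSpace N] [ChartedSpace H' N] {n : WithTop ℕ∞}

theorem ContMDiffAt.hasStrictFDerivAt_writtenInExtChartAt {f : M → N} {p : M}
    (hf : ContMDiffAt I J n f p) (hn : n ≠ 0) :
    HasStrictFDerivAt (writtenInExtChartAt I J p f) (mfderiv I J f p) (extChartAt I p p) := by
  have hC : ContDiffAt 𝕜 n (writtenInExtChartAt I J p f) (extChartAt I p p) := by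
    simpa [I.range_eq_univ, contDiffWithinAt_univ] using (contMDiffAt_iff.1 hf).2
  rw [(hf.mdifferentiableAt hn).mfderiv, I.range_eq_univ, fderivWithin_univ]
  exact hC.hasStrictFDerivAt hn

variable [J.Boundaryless] [CompleteSpace E] [CompleteSpace E']

theorem ContMDiffAt.map_nhds_eq_of_surjective_mfderiv {f : M → N} {p : M}
    (hf : ContMDiffAt I J n f p) (hn : n ≠ 0) (hs : Function.Surjective (mfderiv I J f p)) :
    map f (𝓝 p) = 𝓝 (f p) :=
  hf.continuousAt.map_nhds_eq_of_map_writtenInExtChartAt <|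
    (hf.hasStrictFDerivAt_writtenInExtChartAt hn).map_nhds_eq_of_surj (LinearMap.range_eq_top.2 hs)

variable {F : Type*} [NormedAddCommGroup F] [NormedSpace 𝕜 F] [CompleteSpace F]
  {G : Type*} [TopologicalSpace G] {K : ModelWithCorners 𝕜 F G} [K.Boundaryless]
  {P : Type*} [TopologicalSpace P] [ChartedSpace G P]

theorem ContMDiffAt.eventually_mem_range_of_surjective_mfderiv_partial {f : M × P → N}
    {x₀ : M} {y₀ : P} (hf : ContMDiffAt (I.prod K) J n f (x₀, y₀)) (hn : n ≠ 0)
    (hs : Function.Surjective (mfderiv I J (fun x => f (x, y₀)) x₀)) :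
    ∀ᶠ q : N × P in 𝓝 (f (x₀, y₀), y₀), q.1 ∈ range fun x => f (x, q.2) := by
  have hf' : MDifferentiableAt (I.prod K) J f (x₀, y₀) := hf.mdifferentiableAt hn
  have h_partial : mfderiv I J (fun x => f (x, y₀)) x₀ =
      (mfderiv (I.prod K) J f (x₀, y₀) : E × F →L[𝕜] E') ∘L ContinuousLinearMap.inl 𝕜 E F := by
    have h_incl : MDifferentiableAt I (I.prod K) (·, y₀) x₀ :=
      mdifferentiableAt_id.prodMk mdifferentiableAt_const
    rw [show (fun x => f (x, y₀)) = f ∘ (·, y₀) from rfl, mfderiv_comp x₀ hf' h_incl,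
      mfderiv_prod_left]
    rfl
  have h_graph : mfderiv (I.prod K) (J.prod K) (fun q => (f q, q.2)) (x₀, y₀) =
      (mfderiv (I.prod K) J f (x₀, y₀)).prod (ContinuousLinearMap.snd 𝕜 E F) := by
    rw [hf'.mfderiv_prod mdifferentiableAt_snd, mfderiv_snd]
    rfl
  have h_open : map (fun q => (f q, q.2)) (𝓝 (x₀, y₀)) = 𝓝 (f (x₀, y₀), y₀) :=
    (hf.prodMk contMDiffAt_snd).map_nhds_eq_of_surjective_mfderiv hn <| by
      rw [h_graph]
      exact ContinuousLinearMap.prod_snd_surjective_of_comp_inl_surjective (h_partial ▸ hs)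
  filter_upwards [h_open ▸ range_mem_map] with q ⟨⟨x, y⟩, hq⟩
  subst hq
  exact ⟨x, rfl⟩

end Submersion

theorem exists_open_uniformly_surjective_of_compact_general
    {EX : Type*} [NormedAddCommGroup EX] [NormedSpace ℝ EX] [FiniteDimensional ℝ EX]
    {EY : Type*} [NormedAddCommGroup EY] [NormedSpace ℝ EY] [FiniteDimensional ℝ EY]
    {EZ : Type*} [NormedAddCommGroup EZ] [NormedSpace ℝ EZ] [FiniteDimensional ℝ EZ]
    (X : Type*) [TopologicalSpace X] [ChartedSpace EX X]
    (Y : Type*) [TopologicalSpace Y] [ChartedSpace EY Y]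
    (Z : Type*) [TopologicalSpace Z] [ChartedSpace EZ Z]
    (z₀ : Z) (C : Set Y) (hC : IsCompact C)
    (f : X × Y → Z)
    (hf : ContMDiff ((𝓘(ℝ, EX)).prod (𝓘(ℝ, EY))) (𝓘(ℝ, EZ)) 1 f)
    (hpt : ∀ y ∈ C, ∃ x : X, f (x, y) = z₀ ∧
      Function.Surjective (mfderiv (𝓘(ℝ, EX)) (𝓘(ℝ, EZ)) (fun x' => f (x', y)) x)) :
    ∃ V : Set Z, IsOpen V ∧ z₀ ∈ V ∧ ∀ y ∈ C, V ⊆ Set.range (fun x => f (x, y)) := by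
  have h_local : ∀ y ∈ C, ∀ᶠ q : Z × Y in 𝓝 (z₀, y), q.1 ∈ range fun x => f (x, q.2) := by
    intro y hy
    obtain ⟨x, hx, hs⟩ := hpt y hy
    exact hx ▸ hf.contMDiffAt.eventually_mem_range_of_surjective_mfderiv_partial one_ne_zero hs
  obtain ⟨V, hV, hV_open, hz₀⟩ :=
    eventually_nhds_iff.1 <| hC.eventually_forall_of_forall_eventually
      (P := fun z y => z ∈ range fun x => f (x, y)) h_local
  exact ⟨V, hV_open, hz₀, fun y hy z hz => hV z hz y hy⟩

/-- Corollary 3.6 (real case): let `f : X × Y → Z` be a `C¹` map of smooth real manifolds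
without boundary, `z₀ ∈ Z`, and `C ⊆ Y` compact. If for every `y ∈ C` there is `x ∈ X`
with `f(x, y) = z₀` at which the differential of `f_y` is surjective, then there is an open
set `V ∋ z₀` with `V ⊆ f_y(X)` for every `y ∈ C`. -/
theorem exists_open_uniformly_surjective_of_compact
    {EX : Type*} [NormedAddCommGroup EX] [NormedSpace ℝ EX] [FiniteDimensional ℝ EX]
    {EY : Type*} [NormedAddCommGroup EY] [NormedSpace ℝ EY] [FiniteDimensional ℝ EY]
    {EZ : Type*} [NormedAddCommGroup EZ] [NormedSpace ℝ EZ] [FiniteDimensional ℝ EZ]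
    (X : Type*) [TopologicalSpace X] [ChartedSpace EX X]
    [IsManifold (𝓘(ℝ, EX)) (⊤ : ℕ∞) X]
    (Y : Type*) [TopologicalSpace Y] [ChartedSpace EY Y]
    [IsManifold (𝓘(ℝ, EY)) (⊤ : ℕ∞) Y]
    (Z : Type*) [TopologicalSpace Z] [ChartedSpace EZ Z]
    [IsManifold (𝓘(ℝ, EZ)) (⊤ : ℕ∞) Z]
    (z₀ : Z) (C : Set Y) (hC : IsCompact C)
    (f : X × Y → Z)
    (hf : ContMDiff ((𝓘(ℝ, EX)).prod (𝓘(ℝ, EY))) (𝓘(ℝ, EZ)) 1 f)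
    (hpt : ∀ y ∈ C, ∃ x : X, f (x, y) = z₀ ∧
      Function.Surjective (mfderiv (𝓘(ℝ, EX)) (𝓘(ℝ, EZ)) (fun x' => f (x', y)) x)) :
    ∃ V : Set Z, IsOpen V ∧ z₀ ∈ V ∧ ∀ y ∈ C, V ⊆ Set.range (fun x => f (x, y)) :=
  exists_open_uniformly_surjective_of_compact_general X Y Z z₀ C hC f hf hpt
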